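/- Let ~ be a right congruence of finite index on Σ*. If ~ has a critical tuple, then there exists a critical tuple (u2, v2, u, v) in ~ such that u2 u ~ u2 w u and v2 u ~ v2 w u for all w ∈ {u, v}*. -/

import Mathlib

/-! Common definitions for sliding-window / visibly pushdown formalizations. -/

/-- `γ` grows polynomially: `γ(n) ∈ O(n^k)` for some `k`. -/
def GrowsPolynomially (γ : ℕ → ℕ) : Prop :=
  ∃ k C : ℕ, ∀ n : ℕ, γ n ≤ C * (n + 1) ^ k

/-- `γ` grows exponentially: there is `c > 1` with `γ(n) ≥ c^n` for infinitely many `n`. -/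
def GrowsExponentially (γ : ℕ → ℕ) : Prop :=
  ∃ c : ℝ, 1 < c ∧ ∀ m : ℕ, ∃ n : ℕ, m ≤ n ∧ c ^ n ≤ (γ n : ℝ)

/-- A set of words is suffix-closed. -/
def SuffixClosed {α : Type} (X : Set (List α)) : Prop :=
  ∀ x ∈ X, ∀ s : List α, s <:+ x → s ∈ X

/-- Domain of a partial function presented with `Option`. -/
def pdom {α β : Type} (t : List α → Option β) : Set (List α) := {x | t x ≠ none}

/-- The `t`-growth of `X`: the number of values of `t` on words of `X` of length at most `n`. -/
noncomputable def growthOf {α : Type} {Y : Type} (t : List α → Y) (X : Set (List α)) (n : ℕ) : ℕ :=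
  (t '' {x | x ∈ X ∧ x.length ≤ n}).ncard

/-- Growth of a language: number of its words of length at most `n`. -/
noncomputable def langGrowth {β : Type} (L : Set (List β)) (n : ℕ) : ℕ :=
  {y | y ∈ L ∧ y.length ≤ n}.ncard

/-- Suffix expansion of a (total or partial) function: the tuple of values on all
nonempty suffixes `a₁⋯aₙ, a₂⋯aₙ, …, aₙ` of the input. -/
def cev {α : Type} {Y : Type} (t : List α → Y) (x : List α) : List Y :=
  x.tails.dropLast.map t

/-- Image of `X` under the partial function `t`. -/
def optImage {α β : Type} (t : List α → Option β) (X : Set (List α)) : Set β :=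
  {y | ∃ x ∈ X, t x = some y}

/-- A language is bounded if it is contained in `w₁* w₂* ⋯ w_k*`. -/
def BoundedLang {β : Type} (L : Set (List β)) : Prop :=
  ∃ ws : List (List β), ∀ x ∈ L, ∃ ms : List ℕ, ms.length = ws.length ∧
    x = (List.zipWith (fun (w : List β) (m : ℕ) => (List.replicate m w).flatten) ws ms).flatten

/-- `{u,v}*`: all concatenations of copies of `u` and `v`. -/
def UVStar {α : Type} (u v : List α) : Set (List α) :=
  {w | ∃ l : List (List α), (∀ p ∈ l, p = u ∨ p = v) ∧ w = l.flatten}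

/-- `{u,v}^{≤ n}`: concatenations of at most `n` words, each equal to `u` or `v`. -/
def UVPow {α : Type} (u v : List α) (n : ℕ) : Set (List α) :=
  {w | ∃ l : List (List α), (∀ p ∈ l, p = u ∨ p = v) ∧ l.length ≤ n ∧ w = l.flatten}

/-- The set `{u₂,v₂}{u,v}* Z`. -/
def FoolingSet {α : Type} (u₂ v₂ u v : List α) (Z : Set (List α)) : Set (List α) :=
  {x | ∃ a w z, (a = u₂ ∨ a = v₂) ∧ w ∈ UVStar u v ∧ z ∈ Z ∧ x = a ++ (w ++ z)}

/-- Linear fooling scheme for a partial function `t`. -/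
def IsLinearFoolingScheme {α Y : Type} (t : List α → Option Y)
    (u₂ v₂ u v : List α) (Z : Set (List α)) : Prop :=
  u₂ <:+ u ∧ v₂ <:+ v ∧ u₂.length = v₂.length ∧
  FoolingSet u₂ v₂ u v Z ⊆ pdom t ∧
  ∃ C : ℕ, ∀ n : ℕ, ∃ z ∈ Z, z.length ≤ C * (n + 1) ∧
    ∀ w ∈ UVPow u v n, t (u₂ ++ (w ++ z)) ≠ t (v₂ ++ (w ++ z))

/-- `X` contains a linear fooling set for `t`. -/
def ContainsLinearFoolingSet {α Y : Type} (t : List α → Option Y) (X : Set (List α)) : Prop :=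
  ∃ u₂ v₂ u v Z, IsLinearFoolingScheme t u₂ v₂ u v Z ∧ FoolingSet u₂ v₂ u v Z ⊆ X

/-! ### Transducers and rational functions -/

/-- A finite-state transducer over `(α, β)` with terminal output function. -/
structure Transducer (α β : Type) where
  Q : Type
  finQ : Fintype Q
  I : Set Q
  F : Set Q
  Δ : Set (Q × List α × List β × Q)
  finΔ : Δ.Finite
  o : Q → List β

namespace Transducer

variable {α β : Type}

/-- A run from `p` to `r` with input `x` and output `y`. -/
inductive Run (A : Transducer α β) : A.Q → List α → List β → A.Q → Prop
  | nil (q : A.Q) : Run A q [] [] q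
  | cons {p q r : A.Q} {x₁ x : List α} {y₁ y : List β} :
      (p, x₁, y₁, q) ∈ A.Δ → Run A q x y r → Run A p (x₁ ++ x) (y₁ ++ y) r

/-- The transduction defined by a transducer. -/
def T (A : Transducer α β) : Set (List α × List β) :=
  {p | ∃ q₀ q y, q₀ ∈ A.I ∧ q ∈ A.F ∧ A.Run q₀ p.1 y q ∧ p.2 = y ++ A.o q}

end Transducer

/-- A partial function is rational if its graph is the transduction of some transducer. -/
def IsRationalFun {α β : Type} (t : List α → Option (List β)) : Prop :=
  ∃ A : Transducer α β, ∀ x y, t x = some y ↔ (x, y) ∈ A.T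

/-! ### Right congruences, suffix expansions, critical tuples -/

/-- A right congruence: an equivalence relation compatible with appending on the right. -/
def IsRightCongruence {α : Type} (r : List α → List α → Prop) : Prop :=
  Equivalence r ∧ ∀ x y z : List α, r x y → r (x ++ z) (y ++ z)

/-- Suffix expansion of a relation: words of the same length whose corresponding
nonempty suffixes are all related. -/
def SuffixExpansion {α : Type} (r : List α → List α → Prop) (x y : List α) : Prop :=
  x.length = y.length ∧ ∀ i < x.length, r (x.drop i) (y.drop i)

/-- Number of `r`-classes of words of length at most `n`. -/
noncomputable def classCount {α : Type} (r : List α → List α → Prop) (n : ℕ) : ℕ :=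
  Set.ncard {C : Set (List α) | ∃ x : List α, x.length ≤ n ∧ C = {y | r x y}}

/-- A relation has finite index if it has finitely many classes. -/
def FiniteIndex {α : Type} (r : List α → List α → Prop) : Prop :=
  Set.Finite {C : Set (List α) | ∃ x : List α, C = {y | r x y}}

/-- Critical tuple in a right congruence. -/
def IsCriticalTuple {α : Type} (r : List α → List α → Prop) (u₂ v₂ u v : List α) : Prop :=
  1 ≤ u₂.length ∧ u₂.length = v₂.length ∧ u₂ <:+ u ∧ v₂ <:+ v ∧
  ∀ w ∈ UVStar u v, ¬ r (u₂ ++ w) (v₂ ++ w)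

/-- The Myhill–Nerode right congruence of a language. -/
def MNrel {α : Type} (L : Set (List α)) (x y : List α) : Prop :=
  ∀ z : List α, x ++ z ∈ L ↔ y ++ z ∈ L

/-! ### Suffix distance and the canonical right congruence of a rational function -/

/-- Longest common prefix. -/
def cpre {β : Type} [DecidableEq β] : List β → List β → List β
  | a :: x, b :: y => if a = b then a :: cpre x y else []
  | _, _ => []

/-- `‖x,y‖ = |x| + |y| − 2|x ∧ y|`, where `x ∧ y` is the longest common suffix. -/
def suffDist {β : Type} [DecidableEq β] (x y : List β) : ℕ :=
  x.length + y.length - 2 * (cpre x.reverse y.reverse).length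

/-- Value of a partial function (defaulting to the empty word off the domain). -/
def pval {α β : Type} (t : List α → Option (List β)) (x : List α) : List β :=
  (t x).getD []

/-- The right congruence `R_t` of Reutenauer–Schützenberger. -/
def Rt {α β : Type} [DecidableEq β] (t : List α → Option (List β)) (u v : List α) : Prop :=
  (∀ z : List α, u ++ z ∈ pdom t ↔ v ++ z ∈ pdom t) ∧
  Set.Finite {d : ℕ | ∃ w : List α, u ++ w ∈ pdom t ∧ v ++ w ∈ pdom t ∧
      d = suffDist (pval t (u ++ w)) (pval t (v ++ w))}

/-- Two partial functions are adjacent. -/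
def Adjacent {α β : Type} [DecidableEq β] (t₁ t₂ : List α → Option (List β)) : Prop :=
  Set.Finite {d : ℕ | ∃ w : List α, w ∈ pdom t₁ ∧ w ∈ pdom t₂ ∧
      d = suffDist (pval t₁ w) (pval t₂ w)}

/-! ### Visibly pushdown automata -/

/-- Kinds of letters of a pushdown alphabet. -/
inductive VPKind : Type
  | call : VPKind
  | ret : VPKind
  | intern : VPKind
deriving DecidableEq

/-- A visibly pushdown automaton over the pushdown alphabet determined by `pa`.
The bottom-of-stack symbol `⊥` is represented implicitly by the empty stack. -/
structure VPA (α : Type) (pa : α → VPKind) where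
  Q : Type
  finQ : Fintype Q
  Γ : Type
  finΓ : Fintype Γ
  q₀ : Q
  F : Set Q
  δc : Q → α → Γ × Q
  δr : Q → α → Option Γ → Q
  δi : Q → α → Q

namespace VPA

variable {α : Type} {pa : α → VPKind}

/-- One step of the VPA on a configuration (stack with top at the head, state). -/
def step (A : VPA α pa) (c : List A.Γ × A.Q) (a : α) : List A.Γ × A.Q :=
  match pa a with
  | VPKind.call => ((A.δc c.2 a).1 :: c.1, (A.δc c.2 a).2)
  | VPKind.intern => (c.1, A.δi c.2 a)
  | VPKind.ret =>
    match c.1 with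
    | [] => ([], A.δr c.2 a none)
    | γ :: st => (st, A.δr c.2 a (some γ))

/-- Extended transition function on words. -/
def run (A : VPA α pa) (c : List A.Γ × A.Q) (w : List α) : List A.Γ × A.Q :=
  w.foldl A.step c

/-- The language accepted by a VPA (from the initial configuration `⊥q₀`). -/
def acceptsLang (A : VPA α pa) : Set (List α) :=
  {w | (A.run ([], A.q₀) w).2 ∈ A.F}

/-- Language accepted from a configuration. -/
def AccLang (A : VPA α pa) (c : List A.Γ × A.Q) : Set (List α) :=
  {w | (A.run c w).2 ∈ A.F}

/-- The reachable configurations. -/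
def rConf (A : VPA α pa) : Set (List A.Γ × A.Q) :=
  Set.range (fun w => A.run ([], A.q₀) w)

end VPA

/-- A language is a visibly pushdown language over the pushdown alphabet `pa`. -/
def IsVPL {α : Type} (pa : α → VPKind) (L : Set (List α)) : Prop :=
  ∃ A : VPA α pa, L = A.acceptsLang

/-- Well-matched words over a pushdown alphabet. -/
inductive WellMatched {α : Type} (pa : α → VPKind) : List α → Prop
  | nil : WellMatched pa []
  | intern (a : α) : pa a = VPKind.intern → WellMatched pa [a]
  | append {u v : List α} : WellMatched pa u → WellMatched pa v → WellMatched pa (u ++ v)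
  | wrap {w : List α} {a b : α} : WellMatched pa w → pa a = VPKind.call → pa b = VPKind.ret →
      WellMatched pa (a :: (w ++ [b]))

/-- Descending words: concatenations of well-matched words and return letters. -/
def Descending {α : Type} (pa : α → VPKind) (w : List α) : Prop :=
  ∃ l : List (List α),
    (∀ p ∈ l, WellMatched pa p ∨ ∃ b : α, pa b = VPKind.ret ∧ p = [b]) ∧ w = l.flatten

/-- Length-lexicographic order on configurations `⊥αq` (stacks compared bottom-first). -/
def ConfLe {Q Γ : Type} (ltQ : LinearOrder Q) (ltΓ : LinearOrder Γ)
    (c d : List Γ × Q) : Prop :=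
  c.1.length < d.1.length ∨
    (c.1.length = d.1.length ∧
      (List.Lex ltΓ.lt c.1.reverse d.1.reverse ∨ (c.1 = d.1 ∧ ltQ.le c.2 d.2)))

/-- `rep` chooses from each equivalence class of reachable configurations the
length-lexicographically least representative. -/
def IsRepFun {α : Type} {pa : α → VPKind} (A : VPA α pa)
    (ltQ : LinearOrder A.Q) (ltΓ : LinearOrder A.Γ)
    (rep : List A.Γ × A.Q → List A.Γ × A.Q) : Prop :=
  ∀ c ∈ A.rConf, rep c ∈ A.rConf ∧ A.AccLang (rep c) = A.AccLang c ∧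
    ∀ c' ∈ A.rConf, A.AccLang c' = A.AccLang c → ConfLe ltQ ltΓ (rep c) c'

/-- `ν_A(w)`: the representative of the configuration reached on `w`. -/
def nuA {α : Type} {pa : α → VPKind} (A : VPA α pa)
    (rep : List A.Γ × A.Q → List A.Γ × A.Q) (w : List α) : List A.Γ × A.Q :=
  rep (A.run ([], A.q₀) w)

/-- `σ₀(w)`: the states representing the Myhill–Nerode classes of the nonempty suffixes. -/
def sigma0 {α : Type} {pa : α → VPKind} (A : VPA α pa)
    (rep : List A.Γ × A.Q → List A.Γ × A.Q) (w : List α) : List A.Q :=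
  w.tails.dropLast.map fun s => (nuA A rep s).2

/-- `φ(w)`: the state transformation of a well-matched word. -/
def phiVPA {α : Type} {pa : α → VPKind} (A : VPA α pa) (w : List α) : A.Q → A.Q :=
  fun p => (A.run ([], p) w).2

/-- `σ₁(w) = φ(w) q₂ ⋯ qₙ`, a word over the alphabet `Q^Q ∪ Q`. -/
def sigma1 {α : Type} {pa : α → VPKind} (A : VPA α pa)
    (rep : List A.Γ × A.Q → List A.Γ × A.Q) (w : List α) : List ((A.Q → A.Q) ⊕ A.Q) :=
  Sum.inl (phiVPA A w) :: ((sigma0 A rep w).tail.map Sum.inr)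

/-! ### Real-time right transducers -/

/-- A real-time right transducer (reads its input from right to left). -/
structure RightTransducer (α β : Type) where
  Q : Type
  finQ : Fintype Q
  F : Set Q
  I : Set Q
  Δ : Set (Q × α × List β × Q)
  finΔ : Δ.Finite
  o : Q → List β

namespace RightTransducer

variable {α β : Type}

/-- Input word of a sequence of transitions. -/
def inputOf {Q : Type} (ts : List (Q × α × List β × Q)) : List α :=
  ts.map fun tr => tr.2.1

/-- Output word of a sequence of transitions. -/
def outputOf {Q : Type} (ts : List (Q × α × List β × Q)) : List β :=
  (ts.map fun tr => tr.2.2.1).flatten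

/-- `IsRunFrom A q ts p`: `ts` is a run on its input from the (rightmost) state `p`
to the (leftmost) state `q`; the transitions are listed left to right. -/
def IsRunFrom (A : RightTransducer α β) : A.Q → List (A.Q × α × List β × A.Q) → A.Q → Prop
  | q, [], p => q = p
  | q, tr :: ts, p => tr ∈ A.Δ ∧ tr.1 = q ∧ IsRunFrom A tr.2.2.2 ts p

/-- There is a run on `w` from `p` (right) to `q` (left). -/
def RunOn (A : RightTransducer α β) (q : A.Q) (w : List α) (p : A.Q) : Prop :=
  ∃ ts, A.IsRunFrom q ts p ∧ inputOf ts = w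

/-- `q ⪯ p`: there is a run from `p` to `q`. -/
def Below (A : RightTransducer α β) (q p : A.Q) : Prop :=
  ∃ w, A.RunOn q w p

/-- The partial function defined by a right transducer. -/
def Defines (A : RightTransducer α β) (t : List α → Option (List β)) : Prop :=
  ∀ x y, t x = some y ↔ ∃ p q ts, p ∈ A.F ∧ q ∈ A.I ∧ A.IsRunFrom p ts q ∧
    inputOf ts = x ∧ y = A.o p ++ outputOf ts

/-- Every state occurs on some initial accepting run. -/
def Trim (A : RightTransducer α β) : Prop :=
  ∀ s : A.Q, ∃ p q ts₁ ts₂, p ∈ A.F ∧ q ∈ A.I ∧ A.IsRunFrom p ts₁ s ∧ A.IsRunFrom s ts₂ q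

/-- Every input word has at most one initial accepting run. -/
def Unambiguous (A : RightTransducer α β) : Prop :=
  ∀ p p' q q' ts ts', p ∈ A.F → p' ∈ A.F → q ∈ A.I → q' ∈ A.I →
    A.IsRunFrom p ts q → A.IsRunFrom p' ts' q' → inputOf ts = inputOf ts' →
    p = p' ∧ ts = ts'

/-- `w` is guarded by `p`: some run on `w` from `p` stays in the SCC of `p`. -/
def Guarded (A : RightTransducer α β) (p : A.Q) (w : List α) : Prop :=
  ∃ q', A.RunOn q' w p ∧ A.Below p q'

/-- The transducer is well-behaved: the terminal outputs of guarded accepting runs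
from the same state on words of equal length coincide. -/
def WellBehaved (A : RightTransducer α β) : Prop :=
  ∀ (p q q' : A.Q) ts ts', q ∈ A.F → q' ∈ A.F →
    A.IsRunFrom q ts p → A.IsRunFrom q' ts' p →
    A.Guarded p (inputOf ts) → A.Guarded p (inputOf ts') →
    (inputOf ts).length = (inputOf ts').length →
    A.o q ++ outputOf ts = A.o q' ++ outputOf ts'

end RightTransducer

/-! ### The Parikh-like map Ψ -/

/-- `Ψ(w)`: each letter of `w` paired with its position counted from the right (1-based). -/
def Psi {α : Type} (w : List α) : Set (α × ℕ) :=
  {p | ∃ i : ℕ, w[i]? = some p.1 ∧ p.2 = w.length - i}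

/-- `Ψ(L) = ⋃_{w ∈ L} Ψ(w)`. -/
def PsiL {α : Type} (L : Set (List α)) : Set (α × ℕ) :=
  ⋃ w ∈ L, Psi w

/-! Let `Q` be the finite set of `~`-classes, on which every word `w` acts by `[z] ↦ [z w]`.
Pick `g ∈ {u,v}*` whose action has the smallest image `T`. For every `s ∈ {u,v}*` the action of
`g s g` maps `T` into itself, and onto it since its image cannot be smaller; so it permutes `T`
and some power `(g s g)^k` fixes `T` pointwise. Then `U = (g u g)^k` and `V = (g v g)^m` fix `T`
pointwise, and `T` contains the classes of `u₂ g` and `v₂ g`, whence the absorption property of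
`(u₂ g, v₂ g, U, V)`. This tuple is still critical because `g {U,V}* ⊆ {u,v}*`. -/

namespace UVStar

variable {α : Type} {u v : List α}

theorem flatten_mem {l : List (List α)} (h : ∀ p ∈ l, p ∈ UVStar u v) :
    l.flatten ∈ UVStar u v := by
  induction l with
  | nil => exact ⟨[], by simp, rfl⟩
  | cons a l ih =>
    obtain ⟨la, hla, rfl⟩ := h a List.mem_cons_self
    obtain ⟨ll, hll, hl⟩ := ih fun p hp => h p (List.mem_cons_of_mem _ hp)
    refine ⟨la ++ ll, fun p hp => ?_, by simp [hl]⟩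
    rcases List.mem_append.1 hp with hp | hp
    exacts [hla p hp, hll p hp]

theorem append_mem {a b : List α} (ha : a ∈ UVStar u v) (hb : b ∈ UVStar u v) :
    a ++ b ∈ UVStar u v := by
  simpa using flatten_mem (l := [a, b]) (by simp [ha, hb])

theorem left_mem : u ∈ UVStar u v := ⟨[u], by simp, by simp⟩

theorem right_mem : v ∈ UVStar u v := ⟨[v], by simp, by simp⟩

theorem flatten_replicate_mem {w : List α} (hw : w ∈ UVStar u v) (n : ℕ) :
    (List.replicate n w).flatten ∈ UVStar u v :=
  flatten_mem fun _ hp => List.eq_of_mem_replicate hp ▸ hw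

theorem subset_of_mem {U V : List α} (hU : U ∈ UVStar u v) (hV : V ∈ UVStar u v) :
    UVStar U V ⊆ UVStar u v := by
  rintro _ ⟨l, hl, rfl⟩
  exact flatten_mem fun p hp => by rcases hl p hp with rfl | rfl <;> assumption

end UVStar

theorem List.suffix_flatten_replicate {α : Type*} (w : List α) {k : ℕ} (hk : 0 < k) :
    w <:+ (List.replicate k w).flatten := by
  obtain ⟨n, rfl⟩ := Nat.exists_eq_add_of_lt hk
  simp [List.replicate_succ']

theorem Set.BijOn.exists_iterate_eq_self {Q : Type*} {f : Q → Q} {T : Set Q}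
    (h : Set.BijOn f T T) (hT : T.Finite) : ∃ k, 0 < k ∧ ∀ q ∈ T, f^[k] q = q := by
  have := hT.to_subtype
  obtain ⟨k, hk, hσ⟩ := (isOfFinOrder_of_finite (h.equiv f : Equiv.Perm T)).exists_pow_eq_one
  refine ⟨k, hk, fun q hq => ?_⟩
  have := congrArg (fun σ : Equiv.Perm T => (σ ⟨q, hq⟩ : Q)) hσ
  simpa [Equiv.Perm.coe_pow, Set.BijOn.equiv, h.mapsTo.iterate_restrict] using this

theorem exists_forall_iterate_conj_eq_self {Q : Type*} [Finite Q] (S : Set (Q → Q))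
    (hne : S.Nonempty) (hcomp : ∀ f ∈ S, ∀ g ∈ S, f ∘ g ∈ S) :
    ∃ g ∈ S, ∀ s ∈ S, ∃ k, 0 < k ∧ ∀ q ∈ Set.range g, (g ∘ s ∘ g)^[k] q = q := by
  obtain ⟨g, hg, hmin⟩ := S.exists_min_image (fun f => (Set.range f).ncard) S.toFinite hne
  have hrange : ∀ f ∈ S, Set.range (g ∘ f) = Set.range g := fun f hf =>
    Set.eq_of_subset_of_ncard_le (Set.range_comp_subset_range f g) (hmin _ (hcomp g hg f hf))
  refine ⟨g, hg, fun s hs => Set.BijOn.exists_iterate_eq_self ?_ (Set.toFinite _)⟩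
  refine ((Set.toFinite (Set.range g)).surjOn_iff_bijOn_of_mapsTo
    fun q _ => Set.mem_range_self (s (g q))).mp ?_
  rw [Set.SurjOn, ← Set.range_comp]
  exact (hrange _ (hcomp s hs _ (hcomp g hg g hg))).ge

namespace IsRightCongruence

variable {α : Type} {r : List α → List α → Prop} (hr : IsRightCongruence r)

def setoid : Setoid (List α) := ⟨r, hr.1⟩

theorem finite_quotient (hfi : FiniteIndex r) : Finite (Quotient hr.setoid) := by
  have hclasses : hr.setoid.classes = {C | ∃ x, C = {y | r x y}} := by
    ext C
    refine exists_congr fun x => Eq.congr_right (Set.ext fun y => ?_)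
    exact ⟨hr.1.symm, hr.1.symm⟩
  have : Finite hr.setoid.classes := hclasses ▸ hfi.to_subtype
  exact .of_equiv _ (Setoid.quotientEquivClasses hr.setoid).symm

def act (w : List α) : Quotient hr.setoid → Quotient hr.setoid :=
  Quotient.map (· ++ w) fun _ _ h => hr.2 _ _ w h

theorem act_mk (w x : List α) : hr.act w (Quotient.mk _ x) = Quotient.mk _ (x ++ w) := rfl

theorem act_nil : hr.act [] = id := by
  funext q
  induction q using Quotient.ind
  simp [act_mk]

theorem act_append (a b : List α) : hr.act (a ++ b) = hr.act b ∘ hr.act a := by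
  funext q
  induction q using Quotient.ind
  simp [act_mk]

theorem act_flatten_replicate (n : ℕ) (w : List α) :
    hr.act (List.replicate n w).flatten = (hr.act w)^[n] := by
  induction n with
  | zero => simp [act_nil]
  | succ n ih => rw [List.replicate_succ, List.flatten_cons, act_append, ih,
      Function.iterate_succ]

theorem act_eq_self_of_mem_UVStar {U V : List α} {q : Quotient hr.setoid}
    (hU : hr.act U q = q) (hV : hr.act V q = q) {w : List α} (hw : w ∈ UVStar U V) :
    hr.act w q = q := by
  obtain ⟨l, hl, rfl⟩ := hw
  induction l with
  | nil => simp [act_nil]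
  | cons p l ih =>
    rw [List.flatten_cons, act_append, Function.comp_apply,
      show hr.act p q = q by rcases hl p List.mem_cons_self with rfl | rfl <;> assumption]
    exact ih fun p hp => hl p (List.mem_cons_of_mem _ hp)

end IsRightCongruence

theorem statement5_general {α : Type} (r : List α → List α → Prop)
    (hrc : IsRightCongruence r) (hfi : FiniteIndex r)
    (hct : ∃ u₂ v₂ u v, IsCriticalTuple r u₂ v₂ u v) :
    ∃ u₂ v₂ u v, IsCriticalTuple r u₂ v₂ u v ∧
      ∀ w ∈ UVStar u v, r (u₂ ++ u) (u₂ ++ (w ++ u)) ∧ r (v₂ ++ u) (v₂ ++ (w ++ u)) := by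
  obtain ⟨x₂, y₂, x, y, hx₂, hlen, hx, hy, hcrit⟩ := hct
  have := hrc.finite_quotient hfi
  obtain ⟨_, ⟨G, hG, rfl⟩, hperm⟩ := exists_forall_iterate_conj_eq_self
    (hrc.act '' UVStar x y) ⟨_, _, UVStar.left_mem, rfl⟩
    (by rintro _ ⟨a, ha, rfl⟩ _ ⟨b, hb, rfl⟩
        exact ⟨b ++ a, UVStar.append_mem hb ha, hrc.act_append b a⟩)
  obtain ⟨k, hk, hxG⟩ := hperm _ ⟨x, UVStar.left_mem, rfl⟩
  obtain ⟨m, hm, hyG⟩ := hperm _ ⟨y, UVStar.right_mem, rfl⟩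
  set U := (List.replicate k (G ++ (x ++ G))).flatten
  set V := (List.replicate m (G ++ (y ++ G))).flatten
  have hfix : ∀ a, ∀ w ∈ UVStar U V, r (a ++ G) (a ++ G ++ w) := by
    intro a w hw
    refine Quotient.exact (s := hrc.setoid) (hrc.act_eq_self_of_mem_UVStar ?_ ?_ hw).symm <;>
      rw [hrc.act_flatten_replicate, hrc.act_append, hrc.act_append]
    exacts [hxG _ ⟨Quotient.mk _ a, rfl⟩, hyG _ ⟨Quotient.mk _ a, rfl⟩]
  have habsorb : ∀ a, ∀ w ∈ UVStar U V, r (a ++ G ++ U) (a ++ G ++ (w ++ U)) :=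
    fun a w hw => hrc.1.trans (hrc.1.symm (hfix a U UVStar.left_mem))
      (hfix a _ (UVStar.append_mem hw UVStar.left_mem))
  have hUV : UVStar U V ⊆ UVStar x y := UVStar.subset_of_mem
    (UVStar.flatten_replicate_mem (UVStar.append_mem hG (UVStar.append_mem UVStar.left_mem hG)) k)
    (UVStar.flatten_replicate_mem (UVStar.append_mem hG (UVStar.append_mem UVStar.right_mem hG)) m)
  refine ⟨x₂ ++ G, y₂ ++ G, U, V, ⟨?_, by simp [hlen], ?_, ?_, fun w hw => ?_⟩,
    fun w hw => ⟨habsorb x₂ w hw, habsorb y₂ w hw⟩⟩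
  · simp only [List.length_append]
    omega
  · exact (List.suffix_append_of_suffix (List.suffix_append_self_iff.mpr hx)).trans
      (List.suffix_flatten_replicate _ hk)
  · exact (List.suffix_append_of_suffix (List.suffix_append_self_iff.mpr hy)).trans
      (List.suffix_flatten_replicate _ hm)
  · simpa only [List.append_assoc] using hcrit _ (UVStar.append_mem hG (hUV hw))

/-- a finite-index right congruence with a critical tuple has a
critical tuple `(u₂, v₂, u, v)` with `u₂u ~ u₂wu` and `v₂u ~ v₂wu` for all
`w ∈ {u,v}*`. -/
theorem statement5 {α : Type} [Fintype α] (r : List α → List α → Prop)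
    (hrc : IsRightCongruence r) (hfi : FiniteIndex r)
    (hct : ∃ u₂ v₂ u v, IsCriticalTuple r u₂ v₂ u v) :
    ∃ u₂ v₂ u v, IsCriticalTuple r u₂ v₂ u v ∧
      ∀ w ∈ UVStar u v, r (u₂ ++ u) (u₂ ++ (w ++ u)) ∧ r (v₂ ++ u) (v₂ ++ (w ++ u)) :=
  statement5_general r hrc hfi hct
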